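/- For every set Γ of L-formulas and every L-formula φ: Γ ⊩^{inm} φ if and only if Γ ⊩^{coh} φ; that is, semantic consequence over all intuitionistic neighbourhood models coincides with semantic consequence over coherent intuitionistic neighbourhood models. -/
import Mathlib


/-
Common formalisation of the syntax and semantics of the intuitionistic
monotone modal logic IM, its generalised Hilbert calculi, intuitionistic
neighbourhood models, IFOM-structures, and related constructions.
-/

namespace IMPaper

/-- Formulas of the monotone modal language L. -/
inductive Formula : Type
  | prop : ℕ → Formula
  | bot  : Formula
  | and  : Formula → Formula → Formula
  | or   : Formula → Formula → Formula
  | imp  : Formula → Formula → Formula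
  | box  : Formula → Formula
  | dia  : Formula → Formula
deriving DecidableEq

/-- Negation: ¬φ abbreviates φ → ⊥. -/
def Formula.neg (φ : Formula) : Formula := φ.imp .bot

/-- Top: ⊤ abbreviates ⊥ → ⊥. -/
def Formula.top : Formula := Formula.bot.imp .bot

/-- Substitution of formulas for proposition letters. -/
def Formula.subst (σ : ℕ → Formula) : Formula → Formula
  | .prop i   => σ i
  | .bot      => .bot
  | .and φ ψ  => .and (φ.subst σ) (ψ.subst σ)
  | .or φ ψ   => .or (φ.subst σ) (ψ.subst σ)
  | .imp φ ψ  => .imp (φ.subst σ) (ψ.subst σ)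
  | .box φ    => .box (φ.subst σ)
  | .dia φ    => .dia (φ.subst σ)

private def pp0 : Formula := .prop 0
private def pp1 : Formula := .prop 1
private def pp2 : Formula := .prop 2

/-- A standard axiomatisation of intuitionistic propositional logic. -/
def IpcAx : Set Formula :=
  { Formula.imp pp0 (.imp pp1 pp0),
    Formula.imp (.imp pp0 (.imp pp1 pp2)) (.imp (.imp pp0 pp1) (.imp pp0 pp2)),
    Formula.imp (.and pp0 pp1) pp0,
    Formula.imp (.and pp0 pp1) pp1,
    Formula.imp pp0 (.imp pp1 (.and pp0 pp1)),
    Formula.imp pp0 (.or pp0 pp1),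
    Formula.imp pp1 (.or pp0 pp1),
    Formula.imp (.imp pp0 pp2) (.imp (.imp pp1 pp2) (.imp (.or pp0 pp1) pp2)),
    Formula.imp .bot pp0 }

/-- All substitution instances of a set of formulas. -/
def Instances (Ax : Set Formula) : Set Formula :=
  {φ | ∃ ψ ∈ Ax, ∃ σ, φ = ψ.subst σ}

/-- 𝒜x: all substitution instances of Ax together with all substitution
instances of the axioms of intuitionistic propositional logic. -/
def ScrAx (Ax : Set Formula) : Set Formula := Instances Ax ∪ Instances IpcAx

/-- The generalised Hilbert calculus GHC(Ax). -/
inductive GHC (Ax : Set Formula) : Set Formula → Formula → Prop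
  | el {Γ : Set Formula} {φ : Formula} : φ ∈ Γ → GHC Ax Γ φ
  | ax {Γ : Set Formula} {φ : Formula} : φ ∈ ScrAx Ax → GHC Ax Γ φ
  | mp {Γ : Set Formula} {φ ψ : Formula} :
      GHC Ax Γ φ → GHC Ax Γ (φ.imp ψ) → GHC Ax Γ ψ
  | monBox {Γ : Set Formula} {φ ψ : Formula} :
      GHC Ax ∅ (φ.imp ψ) → GHC Ax Γ ((Formula.box φ).imp (Formula.box ψ))
  | monDia {Γ : Set Formula} {φ ψ : Formula} :
      GHC Ax ∅ (φ.imp ψ) → GHC Ax Γ ((Formula.dia φ).imp (Formula.dia ψ))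

/-- The axioms (neg_a) and (I_◇) of the calculus IMCalc. -/
def IMAx : Set Formula :=
  { Formula.imp ((Formula.box pp0).and (Formula.dia pp0.neg)) .bot,
    Formula.imp ((Formula.box Formula.top).imp (Formula.dia pp0)) (Formula.dia pp0) }

/-- Derivability in the calculus IMCalc = GHC({(□p ∧ ◇¬p) → ⊥, (□⊤ → ◇p) → ◇p}). -/
def IMC : Set Formula → Formula → Prop := GHC IMAx

/-- An intuitionistic neighbourhood: a partial function W ⇀ 𝒫(W), encoded as a
domain together with a (total) value function whose values matter on the domain. -/
structure Nbhd (W : Type) where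
  dom : Set W
  val : W → Set W

/-- The data of an intuitionistic neighbourhood model. -/
structure INStruct (W : Type) where
  le : W → W → Prop
  N : Set (Nbhd W)
  V : ℕ → Set W

variable {W W' : Type}

/-- A set is upward closed w.r.t. the order of the structure. -/
def INStruct.Up (M : INStruct W) (s : Set W) : Prop :=
  ∀ ⦃w v : W⦄, M.le w v → w ∈ s → v ∈ s

/-- `M` is an intuitionistic neighbourhood model: the order is a partial order,
the domain of every neighbourhood is upward closed, and the valuation assigns
upward closed sets to proposition letters. -/
def INStruct.IsModel (M : INStruct W) : Prop :=
  IsPartialOrder W M.le ∧ (∀ a ∈ M.N, M.Up a.dom) ∧ ∀ i, M.Up (M.V i)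

/-- Truth of a formula at a world of an intuitionistic neighbourhood model. -/
def INStruct.sat (M : INStruct W) : Formula → W → Prop
  | .prop i, w  => w ∈ M.V i
  | .bot, _     => False
  | .and φ ψ, w => M.sat φ w ∧ M.sat ψ w
  | .or φ ψ, w  => M.sat φ w ∨ M.sat ψ w
  | .imp φ ψ, w => ∀ v, M.le w v → M.sat φ v → M.sat ψ v
  | .box φ, w   => ∃ a ∈ M.N, w ∈ a.dom ∧
      ∀ w', M.le w w' → ∀ v ∈ a.val w', M.sat φ v
  | .dia φ, w   => ∀ w', M.le w w' → ∀ a ∈ M.N, w' ∈ a.dom →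
      ∃ v ∈ a.val w', M.sat φ v

/-- Semantic consequence over the class of all intuitionistic neighbourhood models. -/
def INConseq (Γ : Set Formula) (φ : Formula) : Prop :=
  ∀ (W : Type) (M : INStruct W), M.IsModel →
    ∀ w : W, (∀ ψ ∈ Γ, M.sat ψ w) → M.sat φ w

/-- A coherent intuitionistic neighbourhood: conditions (N1) and (N2). -/
def INStruct.CoherentNbhd (M : INStruct W) (a : Nbhd W) : Prop :=
  (∀ ⦃w w' : W⦄, M.le w w' → w ∈ a.dom → ∀ v ∈ a.val w, ∃ v' ∈ a.val w', M.le v v') ∧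
  (∀ ⦃w : W⦄, w ∈ a.dom → ∀ v ∈ a.val w, ∀ v', M.le v v' →
      ∃ w', M.le w w' ∧ v' ∈ a.val w')

/-- A model is coherent if all its intuitionistic neighbourhoods are coherent. -/
def INStruct.Coherent (M : INStruct W) : Prop := ∀ a ∈ M.N, M.CoherentNbhd a

/-- Semantic consequence over the class of coherent intuitionistic neighbourhood models. -/
def CohConseq (Γ : Set Formula) (φ : Formula) : Prop :=
  ∀ (W : Type) (M : INStruct W), M.IsModel → M.Coherent →
    ∀ w : W, (∀ ψ ∈ Γ, M.sat ψ w) → M.sat φ w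

/-- The relation R: w R v iff v ∈ a(w) for some neighbourhood a of w. -/
def INStruct.R (M : INStruct W) (w v : W) : Prop :=
  ∃ a ∈ M.N, w ∈ a.dom ∧ v ∈ a.val w

/-- R~-Cartesian: w ≤~ v R~ w implies w = v (with ~ the equivalence closures). -/
def INStruct.RCartesian (M : INStruct W) : Prop :=
  ∀ w v, Relation.EqvGen M.le w v → Relation.EqvGen M.R v w → w = v

/-- N-Cartesian: w R~ v and w, v ∈ dom(a) imply a(w) = a(v). -/
def INStruct.NCartesian (M : INStruct W) : Prop :=
  ∀ a ∈ M.N, ∀ w v, Relation.EqvGen M.R w v → w ∈ a.dom → v ∈ a.dom →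
    a.val w = a.val v

/-- Cartesian: both R~-Cartesian and N-Cartesian. -/
def INStruct.Cartesian (M : INStruct W) : Prop := M.RCartesian ∧ M.NCartesian

/-- Isomorphism of intuitionistic neighbourhood structures. -/
def Isomorphic (M : INStruct W) (M' : INStruct W') : Prop :=
  ∃ (α : W → W') (ν : Nbhd W → Nbhd W'),
    Function.Bijective α ∧ Set.BijOn ν M.N M'.N ∧
    (∀ w v, M.le w v ↔ M'.le (α w) (α v)) ∧
    (∀ a ∈ M.N, ∀ w, w ∈ a.dom ↔ α w ∈ (ν a).dom) ∧
    (∀ a ∈ M.N, ∀ u ∈ a.dom, ∀ w, w ∈ a.val u ↔ α w ∈ (ν a).val (α u)) ∧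
    (∀ i w, w ∈ M.V i ↔ α w ∈ M'.V i)

end IMPaper
namespace IMPaper

variable {W : Type}

/-- Persistence: truth is upward closed in any intuitionistic neighbourhood model. -/
lemma sat_mono {M : INStruct W} (hM : M.IsModel) (φ : Formula) :
    ∀ {w v : W}, M.le w v → M.sat φ w → M.sat φ v := by
  induction φ with
  | prop i => intro w v hle h; exact hM.2.2 i hle h
  | bot => intro w v _ h; exact h
  | and φ ψ ihφ ihψ => intro w v hle h; exact ⟨ihφ hle h.1, ihψ hle h.2⟩
  | or φ ψ ihφ ihψ =>
      intro w v hle h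
      rcases h with h | h
      · exact Or.inl (ihφ hle h)
      · exact Or.inr (ihψ hle h)
  | imp φ ψ ihφ ihψ =>
      intro w v hle h u hu hφ
      exact h u (hM.1.trans _ _ _ hle hu) hφ
  | box φ ih =>
      intro w v hle h
      rcases h with ⟨a, haN, hdom, H⟩
      exact ⟨a, haN, hM.2.1 a haN hle hdom,
        fun w' h' => H w' (hM.1.trans _ _ _ hle h')⟩
  | dia φ ih =>
      intro w v hle h w' h' a haN hdom
      exact h w' (hM.1.trans _ _ _ hle h') a haN hdom

/-- The order on `W × ℕ` used for the coherent lift. -/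
def liftLe (M : INStruct W) (p q : W × ℕ) : Prop :=
  p = q ∨ (M.le p.1 q.1 ∧ p.2 < q.2)

/-- The stretched version of a neighbourhood `a` based at `(w0, n0)`. -/
def liftNbhd (M : INStruct W) (a : Nbhd W) (w0 : W) (n0 : ℕ) : Nbhd (W × ℕ) where
  dom := {p | M.le w0 p.1 ∧ n0 ≤ p.2}
  val := fun p => {q | q.2 = p.2 ∧ ∃ u v, M.le w0 u ∧ M.le u p.1 ∧
    v ∈ a.val u ∧ M.le v q.1 ∧ (p.2 = n0 → v = q.1)}

/-- The coherent lift of an intuitionistic neighbourhood structure. -/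
def lift (M : INStruct W) : INStruct (W × ℕ) where
  le := liftLe M
  N := {b | ∃ a ∈ M.N, ∃ w0 ∈ a.dom, ∃ n0 : ℕ, b = liftNbhd M a w0 n0}
  V := fun i => {p | p.1 ∈ M.V i}

lemma liftLe_refl (M : INStruct W) (p : W × ℕ) : liftLe M p p := Or.inl rfl

lemma liftLe_trans {M : INStruct W} (hM : M.IsModel) {p q r : W × ℕ}
    (h1 : liftLe M p q) (h2 : liftLe M q r) : liftLe M p r := by
  rcases h1 with rfl | ⟨h1a, h1b⟩
  · exact h2
  · rcases h2 with rfl | ⟨h2a, h2b⟩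
    · exact Or.inr ⟨h1a, h1b⟩
    · exact Or.inr ⟨hM.1.trans _ _ _ h1a h2a, Nat.lt_trans h1b h2b⟩

lemma lift_isModel {M : INStruct W} (hM : M.IsModel) : (lift M).IsModel := by
  refine ⟨?_, ?_, ?_⟩
  · show IsPartialOrder (W × ℕ) (liftLe M)
    have anti : ∀ p q : W × ℕ, liftLe M p q → liftLe M q p → p = q := by
      intro p q h1 h2
      rcases h1 with rfl | ⟨_, h1b⟩
      · rfl
      · rcases h2 with rfl | ⟨_, h2b⟩
        · rfl
        · exact absurd (Nat.lt_trans h1b h2b) (Nat.lt_irrefl _)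
    haveI : IsRefl (W × ℕ) (liftLe M) := ⟨liftLe_refl M⟩
    haveI : IsTrans (W × ℕ) (liftLe M) := ⟨fun p q r => liftLe_trans hM⟩
    haveI : IsPreorder (W × ℕ) (liftLe M) := ⟨⟩
    haveI : IsAntisymm (W × ℕ) (liftLe M) := ⟨anti⟩
    exact ⟨⟩
  · rintro b ⟨a, haN, w0, hw0, n0, rfl⟩ p q hle hp
    rcases hle with rfl | ⟨h1, h2⟩
    · exact hp
    · exact ⟨hM.1.trans _ _ _ hp.1 h1, Nat.le_of_lt (Nat.lt_of_le_of_lt hp.2 h2)⟩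
  · intro i p q hle hp
    rcases hle with rfl | ⟨h1, _⟩
    · exact hp
    · exact hM.2.2 i h1 hp

lemma lift_coherent {M : INStruct W} (hM : M.IsModel) : (lift M).Coherent := by
  rintro b ⟨a, haN, w0, hw0, n0, rfl⟩
  constructor
  · -- (N1)
    rintro p p' hle hp x hx
    rcases hle with rfl | ⟨h1, h2⟩
    · exact ⟨x, hx, liftLe_refl M x⟩
    · rcases hx with ⟨hx2, u, v, hu1, hu2, hv, hvx, hdiag⟩
      refine ⟨(x.1, p'.2), ⟨rfl, u, v, hu1, hM.1.trans _ _ _ hu2 h1, hv, hvx, ?_⟩, ?_⟩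
      · intro h
        exact absurd (h ▸ Nat.lt_of_le_of_lt hp.2 h2) (Nat.lt_irrefl _)
      · exact Or.inr ⟨hM.1.refl _, hx2 ▸ h2⟩
  · -- (N2)
    rintro p hp x hx x' hle
    rcases hle with rfl | ⟨h1, h2⟩
    · exact ⟨p, liftLe_refl M p, hx⟩
    · rcases hx with ⟨hx2, u, v, hu1, hu2, hv, hvx, hdiag⟩
      refine ⟨(p.1, x'.2), Or.inr ⟨hM.1.refl _, hx2 ▸ h2⟩,
        ⟨rfl, u, v, hu1, hu2, hv, hM.1.trans _ _ _ hvx h1, ?_⟩⟩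
      intro h
      exact absurd (h ▸ Nat.lt_of_le_of_lt (hx2 ▸ hp.2) h2) (Nat.lt_irrefl _)

/-- Truth lemma for the coherent lift. -/
lemma lift_sat {M : INStruct W} (hM : M.IsModel) (φ : Formula) :
    ∀ p : W × ℕ, (lift M).sat φ p ↔ M.sat φ p.1 := by
  induction φ with
  | prop i => intro p; rfl
  | bot => intro p; rfl
  | and φ ψ ihφ ihψ =>
      intro p
      exact and_congr (ihφ p) (ihψ p)
  | or φ ψ ihφ ihψ =>
      intro p
      exact or_congr (ihφ p) (ihψ p)
  | imp φ ψ ihφ ihψ =>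
      intro p
      constructor
      · intro H v hv hφ
        have := H (v, p.2 + 1) (Or.inr ⟨hv, Nat.lt_succ_self _⟩)
          ((ihφ (v, p.2 + 1)).2 hφ)
        exact (ihψ (v, p.2 + 1)).1 this
      · intro H q hq hφ
        have hle : M.le p.1 q.1 := by
          rcases hq with rfl | ⟨h1, _⟩
          · exact hM.1.refl _
          · exact h1
        exact (ihψ q).2 (H q.1 hle ((ihφ q).1 hφ))
  | box φ ih =>
      intro p
      constructor
      · rintro ⟨b, ⟨a, haN, w0, hw0, n0, rfl⟩, hpdom, H⟩
        refine ⟨a, haN, hM.2.1 a haN hpdom.1 hw0, fun w' hw' v hv => ?_⟩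
        have hx : ((v, p.2 + 1) : W × ℕ) ∈ (liftNbhd M a w0 n0).val (w', p.2 + 1) := by
          refine ⟨rfl, w', v, hM.1.trans _ _ _ hpdom.1 hw', hM.1.refl _, hv,
            hM.1.refl _, fun _ => rfl⟩
        have := H (w', p.2 + 1) (Or.inr ⟨hw', Nat.lt_succ_self _⟩) (v, p.2 + 1) hx
        exact (ih (v, p.2 + 1)).1 this
      · rintro ⟨a, haN, hdom, H⟩
        refine ⟨liftNbhd M a p.1 p.2, ⟨a, haN, p.1, hdom, p.2, rfl⟩,
          ⟨hM.1.refl _, Nat.le_refl _⟩, ?_⟩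
        rintro q hq x ⟨hx2, u, v, hu1, hu2, hv, hvx, hdiag⟩
        exact (ih x).2 (sat_mono hM φ hvx (H u hu1 v hv))
  | dia φ ih =>
      intro p
      constructor
      · intro H w' hw' a haN hdom
        have := H (w', p.2 + 1) (Or.inr ⟨hw', Nat.lt_succ_self _⟩)
          (liftNbhd M a w' (p.2 + 1)) ⟨a, haN, w', hdom, p.2 + 1, rfl⟩
          ⟨hM.1.refl _, Nat.le_refl _⟩
        rcases this with ⟨x, ⟨hx2, u, v, hu1, hu2, hv, hvx, hdiag⟩, hxφ⟩
        have huw : u = w' := hM.1.antisymm _ _ hu2 hu1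
        have hvx1 : v = x.1 := hdiag rfl
        exact ⟨x.1, hvx1 ▸ huw ▸ hv, (ih x).1 hxφ⟩
      · rintro H q hq b ⟨a, haN, w0, hw0, n0, rfl⟩ hqdom
        have hle : M.le p.1 q.1 := by
          rcases hq with rfl | ⟨h1, _⟩
          · exact hM.1.refl _
          · exact h1
        rcases H q.1 hle a haN (hM.2.1 a haN hqdom.1 hw0) with ⟨v, hv, hvφ⟩
        refine ⟨(v, q.2), ⟨rfl, q.1, v, hqdom.1, hM.1.refl _, hv, hM.1.refl _,
          fun _ => rfl⟩, (ih (v, q.2)).2 hvφ⟩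

/-- semantic consequence over all intuitionistic neighbourhood
models coincides with semantic consequence over coherent ones. -/
theorem inm_iff_coh (Γ : Set Formula) (φ : Formula) :
    INConseq Γ φ ↔ CohConseq Γ φ := by
  constructor
  · intro h W M hM _ w hΓ
    exact h W M hM w hΓ
  · intro h W M hM w hΓ
    have hlift := h (W × ℕ) (lift M) (lift_isModel hM) (lift_coherent hM) (w, 0)
      (fun ψ hψ => (lift_sat hM ψ (w, 0)).2 (hΓ ψ hψ))
    exact (lift_sat hM φ (w, 0)).1 hlift

end IMPaper
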